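/- Let k be a field of characteristic p > 0 and G = Spec k[t]/(t^p) a group scheme isomorphic to α_p. For a nonzero invariant differential ω = Σ_{i=0}^{p-2} a_i t^i dt on G, the map x ↦ Σ_{i=0}^{p-2} a_i t^{i+1}/(i+1) defines the unique isomorphism ι: G → α_p = Spec k[x]/(x^p) with ι*(dx) = ω. -/

import Mathlib

/-!
Write `A = k[u]/(u ^ p)` with `u` a primitive generator and let `∂ = d/du`, which exists because
`(X ^ p)' = 0` in characteristic `p`. As `Δ u = u ⊗ 1 + 1 ⊗ u`, the derivation `id ⊗ ∂` of `A ⊗ A`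
intertwines `Δ` with `∂`. For the antiderivative `u₀` of `ω`, so that `du₀ = ω`, invariance of `ω`
says `d(Δ u₀) = d(1 ⊗ u₀)`, hence `Δ (∂ u₀) = 1 ⊗ ∂ u₀`, and applying `id ⊗ ε`, where the
augmentation `ε : A → k` kills `u`, shows that `∂ u₀` is a constant `c`. An element with constant
derivative is affine in `u`, since the coefficient of `u ^ m` for `1 < m < p` is killed by
`m ≠ 0`; as `u₀` has no constant term, `u₀ = c u`, with `c ≠ 0` because `ω ≠ 0`. For uniqueness,
the difference of two primitive elements with the same differential is a primitive constant,
hence zero.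
-/

open scoped TensorProduct
open Polynomial

theorem CharP.natCast_add_one_ne_zero {R : Type*} [AddMonoidWithOne R] {p : ℕ} [CharP R p]
    {i : ℕ} (hi : i + 1 < p) : (i : R) + 1 ≠ 0 := by
  rw [← Nat.cast_succ, Ne, CharP.cast_eq_zero_iff R p]
  exact Nat.not_dvd_of_pos_of_lt i.succ_pos hi

namespace Polynomial

theorem X_pow_dvd_sub_C_coeff_zero_of_X_pow_dvd_derivative {R : Type*} [CommRing R]
    [NoZeroDivisors R] {p : ℕ} [CharP R p] {q : R[X]} (h : X ^ p ∣ derivative q) :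
    X ^ p ∣ q - C (q.coeff 0) := by
  refine X_pow_dvd_iff.mpr fun d hd => ?_
  rcases d with _ | m
  · simp
  have h' := X_pow_dvd_iff.mp h m (by omega)
  rw [coeff_derivative] at h'
  simpa using (mul_eq_zero.mp h').resolve_right (CharP.natCast_add_one_ne_zero hd)

end Polynomial

theorem exists_isAdjoinRoot_root_eq {K A : Type*} [Field K] [CommRing A] [Algebra K A]
    {f : K[X]} (hf : f.Monic) (e : A ≃ₐ[K] AdjoinRoot f) {u : A} (hu : aeval u f = 0)
    (hadj : Algebra.adjoin K {u} = ⊤) : ∃ h : IsAdjoinRoot A f, h.root = u := by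
  have := hf.finite_adjoinRoot
  have := Module.Finite.equiv e.symm.toLinearEquiv
  have hrank : f.natDegree ≤ (minpoly K u).natDegree := by
    rw [← (IsAdjoinRootMonic.mkOfAdjoinEqTop' hadj).finrank, e.toLinearEquiv.finrank_eq,
      (AdjoinRoot.isAdjoinRootMonic f hf).finrank]
  rw [eq_of_monic_of_dvd_of_natDegree_le (minpoly.monic (Algebra.IsIntegral.isIntegral u))
    hf (minpoly.dvd K u hu) hrank]
  exact ⟨_, IsAdjoinRootMonic.mkOfAdjoinEqTop'_root hadj⟩

theorem Derivation.map_aeval_of_isScalarTower {k R S M : Type*} [CommRing k] [CommRing R]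
    [CommRing S] [AddCommGroup M] [Algebra k R] [Algebra k S] [Algebra R S]
    [IsScalarTower k R S] [Module R M] [Module S M] [IsScalarTower R S M]
    (D : Derivation R S M) (q : k[X]) (s : S) :
    D (aeval s q) = aeval s (derivative q) • D s := by
  rw [← aeval_map_algebraMap R, D.map_aeval, derivative_map, aeval_map_algebraMap]

namespace Derivation

variable {k B : Type*} [CommRing k] [CommRing B] [Algebra k B] (A : Type*) [CommRing A]
  [Algebra k A]

noncomputable def baseChange (δ : Derivation k B B) : Derivation A (A ⊗[k] B) (A ⊗[k] B) where
  toLinearMap := δ.toLinearMap.baseChange A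
  map_one_eq_zero' := by simp [Algebra.TensorProduct.one_def]
  leibniz' x y := by
    induction x using TensorProduct.induction_on with
    | zero => simp
    | add x₁ x₂ h₁ h₂ => simp only [add_mul, map_add, h₁, h₂, add_smul, smul_add]; abel
    | tmul a b =>
      induction y using TensorProduct.induction_on with
      | zero => simp
      | add y₁ y₂ h₁ h₂ => simp only [mul_add, map_add, h₁, h₂, smul_add, add_smul]; abel
      | tmul c d =>
        simp [Algebra.TensorProduct.tmul_mul_tmul, TensorProduct.tmul_add, mul_comm a c]

@[simp]
theorem baseChange_tmul (δ : Derivation k B B) (a : A) (b : B) :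
    δ.baseChange A (a ⊗ₜ b) = a ⊗ₜ δ b := by
  simp [baseChange]

end Derivation

section AntiderivSum

variable {k S : Type*} [Field k] [CommRing S] [Algebra k S]

noncomputable def antiderivSum (a : ℕ → k) (n : ℕ) (s : S) : S :=
  ∑ i ∈ Finset.range n, algebraMap k S (a i / ((i : k) + 1)) • s ^ (i + 1)

@[simp]
theorem antiderivSum_zero (a : ℕ → k) (n : ℕ) : antiderivSum a n (0 : S) = 0 := by
  simp [antiderivSum]

theorem AlgHom.map_antiderivSum {T : Type*} [CommRing T] [Algebra k T] (φ : S →ₐ[k] T)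
    (a : ℕ → k) (n : ℕ) (s : S) : φ (antiderivSum a n s) = antiderivSum a n (φ s) := by
  simp [antiderivSum]

theorem Derivation.map_antiderivSum {R M : Type*} [CommRing R] [Algebra k R] [Algebra R S]
    [IsScalarTower k R S] [AddCommGroup M] [Module R M] [Module S M] [IsScalarTower R S M]
    (D : Derivation R S M) {a : ℕ → k} {n : ℕ} (ha : ∀ i < n, (i : k) + 1 ≠ 0) (s : S) :
    D (antiderivSum a n s) = ∑ i ∈ Finset.range n, algebraMap k S (a i) • (s ^ i • D s) := by
  refine (map_sum D _ _).trans (Finset.sum_congr rfl fun i hi => ?_)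
  have hc : D (algebraMap k S (a i / ((i : k) + 1))) = 0 := by
    rw [IsScalarTower.algebraMap_apply k R S, D.map_algebraMap]
  rw [smul_eq_mul, D.leibniz, hc, smul_zero, add_zero, D.leibniz_pow, Nat.add_sub_cancel,
    ← Nat.cast_smul_eq_nsmul S, smul_smul, ← _root_.map_natCast (algebraMap k S), ← map_mul,
    Nat.cast_succ, div_mul_cancel₀ _ (ha i (Finset.mem_range.mp hi))]

end AntiderivSum

namespace IsAdjoinRoot

variable {k A : Type*} [Field k] [CommRing A] [Algebra k A] {p : ℕ}
  (h : IsAdjoinRoot A (X ^ p : k[X])) {Δ : A →ₐ[k] A ⊗[k] A}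
  (hΔ : Δ h.root = h.root ⊗ₜ 1 + 1 ⊗ₜ h.root) {ε : A →ₐ[k] k} (hε : ε h.root = 0)

include hΔ hε in
theorem lift_counit_comul (x : A) :
    Algebra.TensorProduct.lift (AlgHom.id k A) ((Algebra.ofId k A).comp ε)
      (fun _ _ => .all _ _) (Δ x) = x := by
  have hcomp : (Algebra.TensorProduct.lift (AlgHom.id k A) ((Algebra.ofId k A).comp ε)
      (fun _ _ => .all _ _)).comp Δ = AlgHom.id k A := by
    refine AlgHom.ext_of_adjoin_eq_top h.adjoin_root_eq_top ?_
    rintro _ rfl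
    simp [hΔ, hε]
  exact AlgHom.congr_fun hcomp x

include hΔ hε in
theorem counit_eq_zero_of_comul_eq {x : A} (hx : Δ x = x ⊗ₜ 1 + 1 ⊗ₜ x) : ε x = 0 := by
  simpa [hx] using congrArg ε (h.lift_counit_comul hΔ hε x)

include hΔ hε in
theorem eq_algebraMap_counit_of_comul_eq {y : A} (hy : Δ y = 1 ⊗ₜ y) :
    y = algebraMap k A (ε y) := by
  simpa [hy] using (h.lift_counit_comul hΔ hε y).symm

variable [CharP k p]

/-- `d / d root`, well defined because `(X ^ p)' = 0` in characteristic `p`. -/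
noncomputable def derivRoot : Derivation k A A :=
  Derivation.liftOfSurjective h.map_surjective (d := derivative') fun q hq => by
    obtain ⟨s, rfl⟩ := h.map_eq_zero_iff.mp hq
    simp

theorem derivRoot_map (q : k[X]) : h.derivRoot (h.map q) = h.map (derivative q) := by
  simp [derivRoot]

theorem derivRoot_root : h.derivRoot h.root = 1 := by
  simpa using h.derivRoot_map X

theorem exists_eq_algebraMap_add_smul_root {x : A} {c : k}
    (hx : h.derivRoot x = algebraMap k A c) : ∃ b : k, x = algebraMap k A b + c • h.root := by
  obtain ⟨q, rfl⟩ := h.map_surjective x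
  set r := q - C c * X
  have hr : X ^ p ∣ derivative r := by
    rw [← h.map_eq_zero_iff]
    simp [r, ← h.derivRoot_map, hx, ← h.algebraMap_apply]
  refine ⟨q.coeff 0, ?_⟩
  have := h.map_eq_zero_iff.mpr (X_pow_dvd_sub_C_coeff_zero_of_X_pow_dvd_derivative hr)
  simp only [r, map_sub, map_mul, h.map_X, coeff_sub, coeff_C_mul, coeff_X_zero, mul_zero,
    sub_zero, ← h.algebraMap_apply] at this
  rw [Algebra.smul_def]
  linear_combination this

include hΔ in
theorem baseChange_derivRoot_comul (x : A) :
    h.derivRoot.baseChange A (Δ x) = Δ (h.derivRoot x) := by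
  obtain ⟨q, rfl⟩ := h.map_surjective x
  have hΔroot : h.derivRoot.baseChange A (Δ h.root) = 1 := by
    simp [hΔ, h.derivRoot_root, Algebra.TensorProduct.one_def]
  simp only [← h.aeval_root_eq_map, ← aeval_algHom_apply, Derivation.map_aeval_of_isScalarTower,
    hΔroot, h.derivRoot_root, smul_eq_mul, mul_one]

include hΔ hε in
theorem exists_eq_algebraMap_add_smul_root_of_invariant {x : A}
    (hx : KaehlerDifferential.D A (A ⊗[k] A) (Δ x) = KaehlerDifferential.D A (A ⊗[k] A) (1 ⊗ₜ x)) :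
    ∃ b : k, x = algebraMap k A b + ε (h.derivRoot x) • h.root := by
  refine h.exists_eq_algebraMap_add_smul_root (h.eq_algebraMap_counit_of_comul_eq hΔ hε ?_)
  have := congrArg (h.derivRoot.baseChange A).liftKaehlerDifferential hx
  rwa [Derivation.liftKaehlerDifferential_comp_D, Derivation.liftKaehlerDifferential_comp_D,
    h.baseChange_derivRoot_comul hΔ, Derivation.baseChange_tmul] at this

include hΔ hε in
theorem comul_eq_and_pow_eq_zero_and_adjoin_eq_top_of_invariant {x : A}
    (hx : KaehlerDifferential.D A (A ⊗[k] A) (Δ x) = KaehlerDifferential.D A (A ⊗[k] A) (1 ⊗ₜ x))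
    (hεx : ε x = 0) (hx0 : x ≠ 0) :
    Δ x = x ⊗ₜ 1 + 1 ⊗ₜ x ∧ x ^ p = 0 ∧ Algebra.adjoin k {x} = ⊤ := by
  obtain ⟨b, hb⟩ := h.exists_eq_algebraMap_add_smul_root_of_invariant hΔ hε hx
  set c := ε (h.derivRoot x)
  have hb0 : b = 0 := by simpa [hb, hε] using hεx
  rw [hb0, map_zero, zero_add] at hb
  have hc : c ≠ 0 := by
    rintro hc
    exact hx0 (by rw [hb, hc, zero_smul])
  rw [hb]
  refine ⟨?_, ?_, ?_⟩
  · rw [map_smul, hΔ, smul_add, TensorProduct.smul_tmul', ← TensorProduct.tmul_smul]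
  · have hroot : h.root ^ p = 0 := by simpa only [map_pow, aeval_X] using h.aeval_root_self
    rw [_root_.smul_pow, hroot, smul_zero]
  · rw [eq_top_iff, ← h.adjoin_root_eq_top, Algebra.adjoin_le_iff, Set.singleton_subset_iff]
    simpa [smul_smul, inv_mul_cancel₀ hc] using
      Subalgebra.smul_mem _ (Algebra.self_mem_adjoin_singleton k (c • h.root)) c⁻¹

include hΔ hε in
theorem eq_of_comul_eq_of_D_eq {v w : A} (hv : Δ v = v ⊗ₜ 1 + 1 ⊗ₜ v)
    (hw : Δ w = w ⊗ₜ 1 + 1 ⊗ₜ w)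
    (hvw : KaehlerDifferential.D k A v = KaehlerDifferential.D k A w) : v = w := by
  have hprim : Δ (v - w) = (v - w) ⊗ₜ 1 + 1 ⊗ₜ (v - w) := by
    rw [map_sub, hv, hw, TensorProduct.sub_tmul, TensorProduct.tmul_sub]
    abel
  have hδ : h.derivRoot (v - w) = algebraMap k A 0 := by
    simpa [sub_eq_zero] using congrArg h.derivRoot.liftKaehlerDifferential hvw
  obtain ⟨b, hb⟩ := h.exists_eq_algebraMap_add_smul_root hδ
  have hb0 : b = 0 := by simpa [hb] using h.counit_eq_zero_of_comul_eq hΔ hε hprim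
  rwa [hb0, zero_smul, add_zero, map_zero, sub_eq_zero] at hb

end IsAdjoinRoot

/-- Let `k` be a field of characteristic `p > 0` and `G = Spec k[t]/(t^p)` a group
scheme isomorphic to `α_p` (comultiplication `Δ`).  For a nonzero invariant
differential `ω = Σ_{i ≤ p-2} aᵢ tⁱ dt` on `G`, the element
`u = Σ aᵢ t^{i+1}/(i+1)` defines the unique isomorphism `ι : G → α_p` with
`ι*(dx) = ω`: i.e. `u` is the unique primitive generator of `A` (with `u^p = 0`)
satisfying `du = ω`. -/
theorem stmt_15 (k : Type*) [Field k] (p : ℕ) [Fact p.Prime] [CharP k p]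
    -- `A = k[t]/(t^p)` with `tq` the class of the variable
    (A : Type*) [CommRing A] [Algebra k A]
    (e : A ≃ₐ[k] AdjoinRoot (X ^ p : Polynomial k))
    (tq : A) (htq : e tq = AdjoinRoot.root _)
    -- the comultiplication of the Hopf algebra structure
    (Δ : A →ₐ[k] A ⊗[k] A)
    -- `G = Spec A` is isomorphic to `α_p`: there is a primitive generator
    (hiso : ∃ u : A, u ^ p = 0 ∧ Algebra.adjoin k {u} = ⊤ ∧
      Δ u = u ⊗ₜ[k] (1 : A) + (1 : A) ⊗ₜ[k] u)
    -- the coefficients of the differential form `ω = Σ_{i ≤ p-2} aᵢ tⁱ dt`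
    (a : ℕ → k)
    -- `ω` is nonzero
    (hω : (∑ i ∈ Finset.range (p - 1),
        (algebraMap k A (a i)) • ((tq ^ i) • (KaehlerDifferential.D k A tq)))
        ≠ 0)
    -- `ω` is translation invariant: `μ*ω = pr₂*ω` in `Ω[(A ⊗ A)⁄A]`
    (hinv : (∑ i ∈ Finset.range (p - 1),
        (algebraMap k (A ⊗[k] A) (a i)) •
          ((Δ (tq ^ i)) • (KaehlerDifferential.D A (A ⊗[k] A) (Δ tq)))) =
      ∑ i ∈ Finset.range (p - 1),
        (algebraMap k (A ⊗[k] A) (a i)) •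
          (((1 : A) ⊗ₜ[k] (tq ^ i)) •
            (KaehlerDifferential.D A (A ⊗[k] A) ((1 : A) ⊗ₜ[k] tq)))) :
    -- `u = Σ_{i ≤ p-2} aᵢ t^{i+1}/(i+1)` is the unique primitive generator with
    -- `du = ω`
    (∃! u : A,
      Δ u = u ⊗ₜ[k] (1 : A) + (1 : A) ⊗ₜ[k] u ∧
        u ^ p = 0 ∧ Algebra.adjoin k {u} = ⊤ ∧
        KaehlerDifferential.D k A u =
          ∑ i ∈ Finset.range (p - 1),
            (algebraMap k A (a i)) • ((tq ^ i) • (KaehlerDifferential.D k A tq))) ∧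
    (letI u := ∑ i ∈ Finset.range (p - 1),
            (algebraMap k A (a i / ((i : k) + 1))) • tq ^ (i + 1)
     Δ u = u ⊗ₜ[k] (1 : A) + (1 : A) ⊗ₜ[k] u ∧
        u ^ p = 0 ∧ Algebra.adjoin k {u} = ⊤ ∧
        KaehlerDifferential.D k A u =
          ∑ i ∈ Finset.range (p - 1),
            (algebraMap k A (a i)) • ((tq ^ i) • (KaehlerDifferential.D k A tq))) := by
  obtain ⟨u, hu_pow, hu_adj, hu_prim⟩ := hiso
  obtain ⟨h, rfl⟩ := exists_isAdjoinRoot_root_eq (monic_X_pow p) e (by simp [hu_pow]) hu_adj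
  let ε : A →ₐ[k] k := h.liftHom 0 (by simp [(Fact.out : p.Prime).ne_zero])
  have hε : ε h.root = 0 := h.liftHom_root _
  have ha : ∀ i < p - 1, (i : k) + 1 ≠ 0 := fun i hi =>
    CharP.natCast_add_one_ne_zero (by omega)
  rw [← (KaehlerDifferential.D k A).map_antiderivSum ha tq] at hω ⊢
  have hinv' : KaehlerDifferential.D A (A ⊗[k] A) (Δ (antiderivSum a (p - 1) tq)) =
      KaehlerDifferential.D A (A ⊗[k] A) (1 ⊗ₜ antiderivSum a (p - 1) tq) := by
    simp only [map_pow, ← Algebra.TensorProduct.includeRight_apply] at hinv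
    rwa [← Algebra.TensorProduct.includeRight_apply, AlgHom.map_antiderivSum,
      AlgHom.map_antiderivSum, Derivation.map_antiderivSum _ ha,
      Derivation.map_antiderivSum _ ha]
  have hεtq : ε tq = 0 := by
    refine (IsNilpotent.map ⟨p, e.injective ?_⟩ ε).eq_zero
    rw [map_pow, htq, ← AdjoinRoot.mk_X, ← map_pow, AdjoinRoot.mk_self, map_zero]
  have hu₀ := h.comul_eq_and_pow_eq_zero_and_adjoin_eq_top_of_invariant hu_prim hε hinv'
    (by rw [AlgHom.map_antiderivSum, hεtq, antiderivSum_zero])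
    (fun h0 => hω (by rw [h0, map_zero]))
  exact ⟨⟨_, ⟨hu₀.1, hu₀.2.1, hu₀.2.2, rfl⟩,
    fun v hv => h.eq_of_comul_eq_of_D_eq hu_prim hε hv.1 hu₀.1 hv.2.2.2⟩,
    hu₀.1, hu₀.2.1, hu₀.2.2, rfl⟩
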